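/- Let ξ_r be an r-region plan of G with r > 1 and W(ξ_r) > 0. Then Σ_{ξ_{r-1} ∈ A₁(ξ_r)} γ(ξ_{r-1}) · M(ξ_r | ξ_{r-1}) = (γ(ξ_r)/K) · Σ_{{G_k, G_{k'}} ∈ AR(ξ_r)} φ(G[V_k ∪ V_{k'}] | ξ̃_{r-1}) · (W(ξ̃_{r-1})/W(ξ_r)) · (τ(G[V_k ∪ V_{k'}]) / (τ(G_k) · τ(G_{k'})))^{ρ−1} · |C(G_k, G_{k'})|, where for each adjacent pair the plan ξ̃_{r-1} is obtained from ξ_r by replacing the blocks V_k and V_{k'} with V_k ∪ V_{k'}. -/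

import Mathlib

/-!
A 1-region ancestor `ξ'` of `ξ` and `ξ` itself are partitions of `V`, so the blocks in which they
differ cover the same vertices; counting blocks, `ξ'` merges exactly two regions `B, B'` of `ξ`, and
`G[B ∪ B']` is connected exactly when an edge joins `B` and `B'`. Thus `ξ' ↦ ξ.blocks \ ξ'.blocks`
is a bijection from `A₁(ξ)` onto `AR(ξ)`, inverse to merging. Along it the summands agree: `γ(ξ')`
and `γ(ξ)` differ only in the factor `τ(G[B ∪ B'])^ρ` versus `(τ(G[B]) τ(G[B']))^ρ`, which combines
with the tree ratio in `M` into the `(ρ - 1)`-th power. The spanning tree counts divided by are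
positive because regions are connected.
-/

open SimpleGraph

namespace Redist

variable {V : Type*} [Fintype V] [DecidableEq V]

/-- The subgraph of `G` induced by the vertex set `s` (the graph `G[s]`). -/
abbrev ind (G : SimpleGraph V) (s : Set V) : G.Subgraph :=
  (⊤ : G.Subgraph).induce s

/-- `T` is a spanning tree of the subgraph `H` of `G`. -/
def IsSpanningTreeOf (G : SimpleGraph V) (T H : G.Subgraph) : Prop :=
  T ≤ H ∧ T.verts = H.verts ∧ T.coe.IsTree

/-- `τ H`: the number of spanning trees of the subgraph `H`. -/
noncomputable def tau (G : SimpleGraph V) (H : G.Subgraph) : ℕ :=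
  {T : G.Subgraph | IsSpanningTreeOf G T H}.ncard

/-- `C(s, t)`: the set of edges of `G` with one endpoint in `s` and the other in `t`. -/
def crossEdges (G : SimpleGraph V) (s t : Set V) : Set (Sym2 V) :=
  {e | e ∈ G.edgeSet ∧ ∃ u v : V, e = s(u, v) ∧ u ∈ s ∧ v ∈ t}

/-- The subgraph obtained from `H` by adding the edges in `E'` (that are edges of `G`). -/
def withEdges (G : SimpleGraph V) (H : G.Subgraph) (E' : Set (Sym2 V)) : G.Subgraph where
  verts := H.verts ∪ {v | ∃ e ∈ E' ∩ G.edgeSet, v ∈ e}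
  Adj u v := H.Adj u v ∨ (s(u, v) ∈ E' ∧ G.Adj u v)
  adj_sub := by
    rintro u v (h | ⟨-, h⟩)
    · exact H.adj_sub h
    · exact h
  edge_vert := by
    rintro u v (h | ⟨h, hG⟩)
    · exact Or.inl (H.edge_vert h)
    · exact Or.inr ⟨s(u, v), ⟨h, hG⟩, Sym2.mem_mk_left u v⟩
  symm := by
    constructor
    rintro u v (h | ⟨h, hG⟩)
    · exact Or.inl h.symm
    · exact Or.inr ⟨by rwa [Sym2.eq_swap], hG.symm⟩

/-- A plan with `r` regions: a partition of the vertex set into `r` nonempty blocks,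
each inducing a connected subgraph. -/
structure Plan (G : SimpleGraph V) (r : ℕ) where
  blocks : Set (Set V)
  ncard_blocks : blocks.ncard = r
  blocks_nonempty : ∀ B ∈ blocks, B.Nonempty
  blocks_disjoint : ∀ B ∈ blocks, ∀ B' ∈ blocks, B ≠ B' → Disjoint B B'
  blocks_cover : ∀ v : V, ∃ B ∈ blocks, v ∈ B
  blocks_connected : ∀ B ∈ blocks, (ind G B).Connected

/-- `ξp` is a 1-region ancestor of `ξr`: exactly one region of `ξp` is not a region of `ξr`. -/
def IsAncestor (G : SimpleGraph V) {r : ℕ} (ξp : Plan G (r - 1)) (ξr : Plan G r) : Prop :=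
  (ξp.blocks \ ξr.blocks).ncard = 1

/-- An `r`-region forest plan: `r` vertex-disjoint trees covering all of `V`. -/
structure ForestPlan (G : SimpleGraph V) (r : ℕ) where
  trees : Set G.Subgraph
  ncard_trees : trees.ncard = r
  isTree : ∀ T ∈ trees, T.coe.IsTree
  trees_disjoint : ∀ T ∈ trees, ∀ T' ∈ trees, T ≠ T' → Disjoint T.verts T'.verts
  trees_cover : ∀ v : V, ∃ T ∈ trees, v ∈ T.verts

/-- The induced plan of a forest plan (as a family of blocks). -/
def forestBlocks (G : SimpleGraph V) {r : ℕ} (F : ForestPlan G r) : Set (Set V) :=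
  Subgraph.verts '' F.trees

/-- `Fp` is a 1-region tree ancestor of `Fr`. -/
def ForestAncestor (G : SimpleGraph V) {r : ℕ} (Fp : ForestPlan G (r - 1))
    (Fr : ForestPlan G r) : Prop :=
  (Fp.trees \ Fr.trees).ncard = 1

variable {A : Type*}

/-- The set of administrative units meeting the vertex set `s`. -/
def unitSet (η : V → A) (s : Set V) : Set A := {a | (s ∩ η ⁻¹' {a}).Nonempty}

/-- A block is hierarchically connected: its intersection with each administrative unit has
at most one connected component. -/
def HierConnectedBlock (G : SimpleGraph V) (η : V → A) (B : Set V) : Prop :=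
  ∀ a : A, (ind G (B ∩ η ⁻¹' {a})).coe.Preconnected

/-- `T` is an `η`-hierarchical tree on the region induced by `B`. -/
def IsHierTree (G : SimpleGraph V) (η : V → A) (T : G.Subgraph) (B : Set V) : Prop :=
  IsSpanningTreeOf G T (ind G B) ∧
    ∀ a : A, (B ∩ η ⁻¹' {a}).Nonempty →
      IsSpanningTreeOf G (T.induce (B ∩ η ⁻¹' {a})) (ind G (B ∩ η ⁻¹' {a}))

/-- Two blocks are administratively adjacent. -/
def AdminAdj (G : SimpleGraph V) (η : V → A) (B B' : Set V) : Prop :=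
  ∃ a : A, ∃ u v : V, G.Adj u v ∧ u ∈ B ∩ η ⁻¹' {a} ∧ v ∈ B' ∩ η ⁻¹' {a}

/-- `S` is (the set of regions of) a connected component of the administrative adjacency
graph of the plan with blocks `blocks`. -/
def IsAdminComponent (G : SimpleGraph V) (η : V → A) (blocks S : Set (Set V)) : Prop :=
  S ⊆ blocks ∧ S.Nonempty ∧
    (∀ B ∈ S, ∀ B' ∈ S,
      Relation.ReflTransGen (fun X Y => X ∈ S ∧ Y ∈ S ∧ AdminAdj G η X Y) B B') ∧
    ∀ B ∈ S, ∀ B' ∈ blocks, B' ∉ S → ¬AdminAdj G η B B'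

/-- The number of connected components of the subgraph induced by `s`. -/
noncomputable def numComponents (G : SimpleGraph V) (s : Set V) : ℕ :=
  Nat.card ((ind G s).coe.ConnectedComponent)

/-- The number of administrative splits of a family `S` of blocks. -/
noncomputable def splits [Fintype A] (G : SimpleGraph V) (η : V → A) (S : Set (Set V)) : ℕ :=
  (∑ᶠ a : A, ∑ᶠ B ∈ S, numComponents G (B ∩ η ⁻¹' {a})) -
    {a : A | ∃ B ∈ S, (B ∩ η ⁻¹' {a}).Nonempty}.ncard

/-- `T` is a hierarchical plan tree for the plan with blocks `blocks`. -/
def IsHierPlanTree (G : SimpleGraph V) (η : V → A) (T : G.Subgraph)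
    (blocks : Set (Set V)) : Prop :=
  IsHierTree G η T Set.univ ∧ ∀ B ∈ blocks, IsHierTree G η (T.induce B) B

/-- The plan with blocks `blocks` is hierarchical. -/
def IsHierPlanBlocks (G : SimpleGraph V) (η : V → A) (blocks : Set (Set V)) : Prop :=
  ∃ T : G.Subgraph, IsHierPlanTree G η T blocks

/-- The effective region tree boundary length between two vertex-disjoint trees. -/
noncomputable def EffB (G : SimpleGraph V) (p : G.Subgraph → Sym2 V → ℝ)
    (Tk Tk' : G.Subgraph) : ℝ :=
  ∑ᶠ e ∈ crossEdges G Tk.verts Tk'.verts, p (withEdges G (Tk ⊔ Tk') {e}) e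

theorem diff_union_singleton_diff_self {α : Type*} {P s : Set α} {x : α} (hx : x ∉ P) :
    (P \ s ∪ {x}) \ P = {x} := by
  ext y
  constructor
  · rintro ⟨⟨hy, -⟩ | hy, hyP⟩
    exacts [absurd hy hyP, hy]
  · rintro rfl
    exact ⟨Or.inr rfl, hx⟩

theorem self_diff_diff_union_singleton {α : Type*} {P s : Set α} {x : α} (hs : s ⊆ P)
    (hx : x ∉ P) : P \ (P \ s ∪ {x}) = s := by
  ext y
  constructor
  · rintro ⟨hyP, hy⟩
    by_contra hys
    exact hy (Or.inl ⟨hyP, hys⟩)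
  · intro hys
    refine ⟨hs hys, ?_⟩
    rintro (⟨-, hy⟩ | rfl)
    exacts [hy hys, hx (hs hys)]

theorem finprod_mem_diff_union_singleton {α M : Type*} [CommMonoid M] {P s : Set α} {x : α}
    (hP : P.Finite) (hx : x ∉ P) (f : α → M) :
    ∏ᶠ i ∈ P \ s ∪ {x}, f i = (∏ᶠ i ∈ P \ s, f i) * f x := by
  rw [finprod_mem_union (Set.disjoint_singleton_right.mpr fun h => hx h.1) hP.sdiff
    (Set.finite_singleton x), finprod_mem_singleton]

theorem finprod_mem_eq_diff_pair_mul {α M : Type*} [CommMonoid M] {P : Set α} {x y : α}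
    (hP : P.Finite) (hx : x ∈ P) (hy : y ∈ P) (hxy : x ≠ y) (f : α → M) :
    ∏ᶠ i ∈ P, f i = (∏ᶠ i ∈ P \ {x, y}, f i) * (f x * f y) := by
  rw [← finprod_mem_pair hxy, mul_comm,
    finprod_mem_mul_sdiff (Set.pair_subset hx hy) hP]

theorem mul_div_mul_eq_div_mul_rpow_sub_one {W W' p φ n K a b x ρ : ℝ} (hW : W ≠ 0)
    (ha : 0 < a) (hb : 0 < b) (hx : 0 < x) :
    W' * (p * x ^ ρ) * (φ * (a * b * n) / (K * x)) =
      W * (p * (a ^ ρ * b ^ ρ)) / K * (φ * (W' / W) * (x / (a * b)) ^ (ρ - 1) * n) := by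
  have hab : 0 < a * b := mul_pos ha hb
  rw [Real.div_rpow hx.le hab.le, Real.rpow_sub hx, Real.rpow_sub hab, Real.rpow_one,
    Real.rpow_one, ← Real.mul_rpow ha.le hb.le]
  have habρ := (Real.rpow_pos_of_pos hab ρ).ne'
  field_simp

section Regions

variable {V : Type*} {G : SimpleGraph V}

theorem exists_isSpanningTreeOf {H : G.Subgraph} (hH : H.Connected) :
    ∃ T : G.Subgraph, IsSpanningTreeOf G T H := by
  obtain ⟨T, hTH, hT⟩ := hH.coe.exists_isTree_le
  let T' : G.Subgraph :=
    { verts := H.verts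
      Adj := fun u v => ∃ (hu : u ∈ H.verts) (hv : v ∈ H.verts), T.Adj ⟨u, hu⟩ ⟨v, hv⟩
      adj_sub := fun ⟨_, _, h⟩ => H.adj_sub (hTH h)
      edge_vert := fun ⟨hu, _, _⟩ => hu
      symm := ⟨fun _ _ ⟨hu, hv, h⟩ => ⟨hv, hu, h.symm⟩⟩ }
  have hT'_coe : T'.coe = T := by
    ext ⟨u, hu⟩ ⟨v, hv⟩
    exact ⟨fun ⟨_, _, h⟩ => h, fun h => ⟨hu, hv, h⟩⟩
  exact ⟨T', ⟨le_rfl, fun _ _ ⟨_, _, h⟩ => hTH h⟩, rfl, hT'_coe ▸ hT⟩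

theorem tau_pos [Finite V] {H : G.Subgraph} (hH : H.Connected) : 0 < tau G H :=
  (Set.ncard_pos (Set.toFinite _)).mpr (exists_isSpanningTreeOf hH)

theorem connected_ind_union_iff {s t : Set V} (hs : (ind G s).Connected)
    (ht : (ind G t).Connected) (hst : Disjoint s t) :
    (ind G (s ∪ t)).Connected ↔ (crossEdges G s t).Nonempty := by
  refine ⟨fun h => ?_, fun ⟨_, hadj, u, v, he, hu, hv⟩ => ?_⟩
  · obtain ⟨u, hu⟩ := hs.nonempty
    obtain ⟨v, hv⟩ := ht.nonempty
    obtain ⟨p⟩ := h.coe.preconnected ⟨u, Or.inl hu⟩ ⟨v, Or.inr hv⟩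
    obtain ⟨d, -, hds, hdt⟩ :=
      p.exists_boundary_dart {x | x.1 ∈ s} hu (Set.disjoint_right.mp hst hv)
    exact ⟨s(d.fst.1, d.snd.1), (ind G (s ∪ t)).adj_sub d.adj, _, _, rfl, hds,
      d.snd.2.resolve_left hdt⟩
  · subst he
    exact connected_induce_iff.mp <| connected_induce_union
      (connected_induce_iff.mpr hs).preconnected (connected_induce_iff.mpr ht).preconnected
      hu hv hadj

end Regions

namespace Plan

variable {V : Type*} {G : SimpleGraph V} {r : ℕ}

theorem blocks_injective : Function.Injective (blocks : Plan G r → Set (Set V)) := by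
  rintro ⟨⟩ ⟨⟩ h
  cases h
  rfl

instance [Finite V] : Finite (Plan G r) :=
  Finite.of_injective _ blocks_injective

theorem eq_of_mem_of_mem (ξ : Plan G r) {B B' : Set V} {v : V} (hB : B ∈ ξ.blocks)
    (hB' : B' ∈ ξ.blocks) (hv : v ∈ B) (hv' : v ∈ B') : B = B' := by
  by_contra hne
  exact Set.disjoint_left.mp (ξ.blocks_disjoint B hB B' hB' hne) hv hv'

theorem union_notMem (ξ : Plan G r) {B B' : Set V} (hB : B ∈ ξ.blocks) (hB' : B' ∈ ξ.blocks)
    (hne : B ≠ B') : B ∪ B' ∉ ξ.blocks := by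
  intro hU
  obtain ⟨v, hv⟩ := ξ.blocks_nonempty B hB
  obtain ⟨v', hv'⟩ := ξ.blocks_nonempty B' hB'
  exact hne <| (ξ.eq_of_mem_of_mem hU hB (Or.inl hv) hv).symm.trans
    (ξ.eq_of_mem_of_mem hU hB' (Or.inr hv') hv')

theorem tau_pos [Finite V] (ξ : Plan G r) {C : Set V} (hC : C ∈ ξ.blocks) :
    (0 : ℝ) < tau G (ind G C) :=
  Nat.cast_pos.mpr (Redist.tau_pos (ξ.blocks_connected C hC))

theorem sUnion_sdiff_subset {m n : ℕ} (ξ : Plan G m) (ξ' : Plan G n) :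
    ⋃₀ (ξ.blocks \ ξ'.blocks) ⊆ ⋃₀ (ξ'.blocks \ ξ.blocks) := by
  rintro v ⟨C, ⟨hC, hCξ'⟩, hvC⟩
  obtain ⟨D, hD, hvD⟩ := ξ'.blocks_cover v
  refine ⟨D, ⟨hD, fun hDξ => hCξ' ?_⟩, hvD⟩
  rwa [ξ.eq_of_mem_of_mem hC hDξ hvC hvD]

theorem sUnion_sdiff_eq {m n : ℕ} (ξ : Plan G m) (ξ' : Plan G n) :
    ⋃₀ (ξ.blocks \ ξ'.blocks) = ⋃₀ (ξ'.blocks \ ξ.blocks) :=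
  (sUnion_sdiff_subset ξ ξ').antisymm (sUnion_sdiff_subset ξ' ξ)

/-- The plan `ξ̃` obtained by merging two adjacent regions `B, B'` of `ξ`. -/
def merge [Finite V] (ξ : Plan G r) {B B' : Set V} (hB : B ∈ ξ.blocks) (hB' : B' ∈ ξ.blocks)
    (hne : B ≠ B') (hBB' : (crossEdges G B B').Nonempty) : Plan G (r - 1) where
  blocks := ξ.blocks \ {B, B'} ∪ {B ∪ B'}
  ncard_blocks := by
    have hU := ξ.union_notMem hB hB' hne
    have hpair := Set.ncard_le_ncard (Set.pair_subset hB hB')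
    rw [Set.ncard_pair hne, ξ.ncard_blocks] at hpair
    rw [Set.ncard_union_eq (Set.disjoint_singleton_right.mpr fun h => hU h.1),
      Set.ncard_sdiff (Set.pair_subset hB hB'), Set.ncard_pair hne, ξ.ncard_blocks,
      Set.ncard_singleton]
    omega
  blocks_nonempty := by
    rintro C (⟨hC, -⟩ | rfl)
    exacts [ξ.blocks_nonempty C hC, (ξ.blocks_nonempty B hB).mono Set.subset_union_left]
  blocks_disjoint := by
    have hU : ∀ C ∈ ξ.blocks \ {B, B'}, Disjoint (B ∪ B') C := fun C ⟨hC, hCBB'⟩ =>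
      Disjoint.union_left (ξ.blocks_disjoint B hB C hC fun h => hCBB' (Or.inl h.symm))
        (ξ.blocks_disjoint B' hB' C hC fun h => hCBB' (Or.inr h.symm))
    rintro C (hC | rfl) C' (hC' | rfl) hCC'
    exacts [ξ.blocks_disjoint C hC.1 C' hC'.1 hCC', (hU C hC).symm, hU C' hC',
      absurd rfl hCC']
  blocks_cover v := by
    obtain ⟨C, hC, hvC⟩ := ξ.blocks_cover v
    by_cases hCBB' : C ∈ ({B, B'} : Set (Set V))
    · refine ⟨B ∪ B', Or.inr rfl, ?_⟩
      rcases hCBB' with rfl | rfl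
      exacts [Or.inl hvC, Or.inr hvC]
    · exact ⟨C, Or.inl ⟨hC, hCBB'⟩, hvC⟩
  blocks_connected := by
    rintro C (⟨hC, -⟩ | rfl)
    · exact ξ.blocks_connected C hC
    · exact (connected_ind_union_iff (ξ.blocks_connected B hB) (ξ.blocks_connected B' hB')
        (ξ.blocks_disjoint B hB B' hB' hne)).mpr hBB'

end Plan

section Ancestors

variable {V : Type*} {G : SimpleGraph V} {r : ℕ}

theorem IsAncestor.exists_pair [Finite V] {ξp : Plan G (r - 1)} {ξ : Plan G r}
    (h : IsAncestor G ξp ξ) :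
    ∃ B ∈ ξ.blocks, ∃ B' ∈ ξ.blocks, B ≠ B' ∧ (crossEdges G B B').Nonempty ∧
      ξ.blocks \ ξp.blocks = {B, B'} ∧ ξp.blocks = ξ.blocks \ {B, B'} ∪ {B ∪ B'} := by
  obtain ⟨U, hU⟩ := Set.ncard_eq_one.mp h
  have hcard : (ξ.blocks \ ξp.blocks).ncard = 2 := by
    have hp := Set.ncard_inter_add_ncard_sdiff_eq_ncard ξp.blocks ξ.blocks
    have hξ := Set.ncard_inter_add_ncard_sdiff_eq_ncard ξ.blocks ξp.blocks
    rw [Set.inter_comm, h, ξp.ncard_blocks] at hp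
    rw [ξ.ncard_blocks] at hξ
    omega
  obtain ⟨B, B', hne, hBB'⟩ := Set.ncard_eq_two.mp hcard
  have hB : B ∈ ξ.blocks \ ξp.blocks := hBB' ▸ Or.inl rfl
  have hB' : B' ∈ ξ.blocks \ ξp.blocks := hBB' ▸ Or.inr rfl
  have hU_eq : U = B ∪ B' := by
    simpa only [hU, hBB', Set.sUnion_singleton, Set.sUnion_pair] using ξp.sUnion_sdiff_eq ξ
  have hblocks : ξp.blocks = ξ.blocks \ {B, B'} ∪ {B ∪ B'} := by
    rw [← hBB', ← hU_eq, ← hU, Set.sdiff_sdiff_right_self, Set.inter_comm, Set.inter_union_sdiff]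
  have hconn : (ind G (B ∪ B')).Connected := ξp.blocks_connected _ (hblocks ▸ Or.inr rfl)
  refine ⟨B, hB.1, B', hB'.1, hne, ?_, hBB', hblocks⟩
  exact (connected_ind_union_iff (ξ.blocks_connected B hB.1) (ξ.blocks_connected B' hB'.1)
    (ξ.blocks_disjoint B hB.1 B' hB'.1 hne)).mp hconn

theorem IsAncestor.eq_of_sdiff_eq [Finite V] {ξp ξq : Plan G (r - 1)} {ξ : Plan G r}
    (hp : IsAncestor G ξp ξ) (hq : IsAncestor G ξq ξ)
    (h : ξ.blocks \ ξp.blocks = ξ.blocks \ ξq.blocks) : ξp = ξq := by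
  obtain ⟨B, -, B', -, -, -, hpB, hp⟩ := hp.exists_pair
  obtain ⟨C, -, C', -, -, -, hqC, hq⟩ := hq.exists_pair
  have hBC : ({B, B'} : Set (Set V)) = {C, C'} := hpB.symm.trans (h.trans hqC)
  apply Plan.blocks_injective
  rw [hp, hq, ← Set.sUnion_pair B B', hBC, Set.sUnion_pair]

theorem isAncestor_merge [Finite V] (ξ : Plan G r) {B B' : Set V} (hB : B ∈ ξ.blocks)
    (hB' : B' ∈ ξ.blocks) (hne : B ≠ B') (hBB' : (crossEdges G B B').Nonempty) :
    IsAncestor G (ξ.merge hB hB' hne hBB') ξ := by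
  rw [IsAncestor, Plan.merge, diff_union_singleton_diff_self (ξ.union_notMem hB hB' hne),
    Set.ncard_singleton]

theorem sdiff_merge_blocks [Finite V] (ξ : Plan G r) {B B' : Set V} (hB : B ∈ ξ.blocks)
    (hB' : B' ∈ ξ.blocks) (hne : B ≠ B') (hBB' : (crossEdges G B B').Nonempty) :
    ξ.blocks \ (ξ.merge hB hB' hne hBB').blocks = {B, B'} :=
  self_diff_diff_union_singleton (Set.pair_subset hB hB') (ξ.union_notMem hB hB' hne)

end Ancestors

theorem stmt_8_general (G : SimpleGraph V) (r : ℕ) (ξr : Plan G r)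
    (W : Set (Set V) → ℝ) (hWr : 0 < W ξr.blocks)
    (ρ : ℝ) (K : ℝ)
    (φ : Set V → Set (Set V) → ℝ)
    (γ : Set (Set V) → ℝ)
    (hγ : ∀ P : Set (Set V), γ P = W P * ∏ᶠ B ∈ P, (tau G (ind G B) : ℝ) ^ ρ)
    (M : Plan G (r - 1) → ℝ)
    (hM : ∀ ξp : Plan G (r - 1), IsAncestor G ξp ξr →
      ∀ Bold ∈ ξp.blocks \ ξr.blocks,
        ∀ Bk ∈ ξr.blocks \ ξp.blocks, ∀ Bk' ∈ ξr.blocks \ ξp.blocks, Bk ≠ Bk' →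
          M ξp = φ Bold ξp.blocks *
            ((tau G (ind G Bk) : ℝ) * (tau G (ind G Bk') : ℝ) *
              ((crossEdges G Bk Bk').ncard : ℝ)) / (K * (tau G (ind G Bold) : ℝ)))
    (g : Set (Set V) → ℝ)
    (hg : ∀ Bk ∈ ξr.blocks, ∀ Bk' ∈ ξr.blocks, Bk ≠ Bk' →
      (crossEdges G Bk Bk').Nonempty →
      g {Bk, Bk'} =
        φ (Bk ∪ Bk') ((ξr.blocks \ {Bk, Bk'}) ∪ {Bk ∪ Bk'}) *
          (W ((ξr.blocks \ {Bk, Bk'}) ∪ {Bk ∪ Bk'}) / W ξr.blocks) *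
          ((tau G (ind G (Bk ∪ Bk')) : ℝ) /
              ((tau G (ind G Bk) : ℝ) * (tau G (ind G Bk') : ℝ))) ^ (ρ - 1) *
          ((crossEdges G Bk Bk').ncard : ℝ)) :
    ∑ᶠ ξp ∈ {ξp : Plan G (r - 1) | IsAncestor G ξp ξr}, γ ξp.blocks * M ξp =
      (γ ξr.blocks / K) *
        ∑ᶠ P ∈ {P : Set (Set V) | ∃ Bk ∈ ξr.blocks, ∃ Bk' ∈ ξr.blocks,
            Bk ≠ Bk' ∧ (crossEdges G Bk Bk').Nonempty ∧ P = {Bk, Bk'}}, g P := by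
  rw [mul_finsum_mem]
  refine finsum_mem_eq_of_bijOn (fun ξp => ξr.blocks \ ξp.blocks) ⟨?_, ?_, ?_⟩ ?_
  · intro ξp hξp
    obtain ⟨B, hB, B', hB', hne, hBB', hdiff, -⟩ := IsAncestor.exists_pair hξp
    exact ⟨B, hB, B', hB', hne, hBB', hdiff⟩
  · exact fun ξp hξp ξq hξq => IsAncestor.eq_of_sdiff_eq hξp hξq
  · rintro _ ⟨B, hB, B', hB', hne, hBB', rfl⟩
    exact ⟨ξr.merge hB hB' hne hBB', isAncestor_merge ξr hB hB' hne hBB',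
      sdiff_merge_blocks ξr hB hB' hne hBB'⟩
  intro ξp hξp
  obtain ⟨B, hB, B', hB', hne, hBB', hdiff, hblocks⟩ := IsAncestor.exists_pair hξp
  have hU : B ∪ B' ∉ ξr.blocks := ξr.union_notMem hB hB' hne
  have hUp : B ∪ B' ∈ ξp.blocks := hblocks ▸ Or.inr rfl
  have hMξp := hM ξp hξp (B ∪ B') ⟨hUp, hU⟩ B (hdiff ▸ Or.inl rfl) B' (hdiff ▸ Or.inr rfl) hne
  rw [hdiff, hγ, hγ, hMξp, hg B hB B' hB' hne hBB', hblocks,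
    finprod_mem_eq_diff_pair_mul (Set.toFinite _) hB hB' hne,
    finprod_mem_diff_union_singleton (Set.toFinite _) hU]
  exact mul_div_mul_eq_div_mul_rpow_sub_one hWr.ne' (ξr.tau_pos hB) (ξr.tau_pos hB')
    (ξp.tau_pos hUp)

/-- The marginal-proposal identity
`Σ_{ξp ∈ A₁(ξr)} γ(ξp)·M(ξr|ξp) = (γ(ξr)/K)·Σ_{{G_k,G_{k'}} ∈ AR(ξr)} φ(…)·(W(ξ̃)/W(ξr))·
(τ(G_k∪G_{k'})/(τ(G_k)τ(G_{k'})))^{ρ-1}·|C(G_k,G_{k'})|`.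
Here `W`, `φ` act on plans through their block families, `γ P = W P · ∏_{B∈P} τ(G[B])^ρ`,
`M` is the forward kernel (pinned by `hM` on ancestors), and `g` is the summand on
unordered adjacent pairs (pinned by `hg`). -/
theorem stmt_8 (G : SimpleGraph V) (r : ℕ) (hr : 1 < r) (ξr : Plan G r)
    (W : Set (Set V) → ℝ) (hW : ∀ P, 0 ≤ W P) (hWr : 0 < W ξr.blocks)
    (ρ : ℝ) (K : ℝ) (hK : 0 < K)
    (φ : Set V → Set (Set V) → ℝ)
    (γ : Set (Set V) → ℝ)
    (hγ : ∀ P : Set (Set V), γ P = W P * ∏ᶠ B ∈ P, (tau G (ind G B) : ℝ) ^ ρ)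
    (M : Plan G (r - 1) → ℝ)
    (hM : ∀ ξp : Plan G (r - 1), IsAncestor G ξp ξr →
      ∀ Bold ∈ ξp.blocks \ ξr.blocks,
        ∀ Bk ∈ ξr.blocks \ ξp.blocks, ∀ Bk' ∈ ξr.blocks \ ξp.blocks, Bk ≠ Bk' →
          M ξp = φ Bold ξp.blocks *
            ((tau G (ind G Bk) : ℝ) * (tau G (ind G Bk') : ℝ) *
              ((crossEdges G Bk Bk').ncard : ℝ)) / (K * (tau G (ind G Bold) : ℝ)))
    (g : Set (Set V) → ℝ)
    (hg : ∀ Bk ∈ ξr.blocks, ∀ Bk' ∈ ξr.blocks, Bk ≠ Bk' →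
      (crossEdges G Bk Bk').Nonempty →
      g {Bk, Bk'} =
        φ (Bk ∪ Bk') ((ξr.blocks \ {Bk, Bk'}) ∪ {Bk ∪ Bk'}) *
          (W ((ξr.blocks \ {Bk, Bk'}) ∪ {Bk ∪ Bk'}) / W ξr.blocks) *
          ((tau G (ind G (Bk ∪ Bk')) : ℝ) /
              ((tau G (ind G Bk) : ℝ) * (tau G (ind G Bk') : ℝ))) ^ (ρ - 1) *
          ((crossEdges G Bk Bk').ncard : ℝ)) :
    ∑ᶠ ξp ∈ {ξp : Plan G (r - 1) | IsAncestor G ξp ξr}, γ ξp.blocks * M ξp =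
      (γ ξr.blocks / K) *
        ∑ᶠ P ∈ {P : Set (Set V) | ∃ Bk ∈ ξr.blocks, ∃ Bk' ∈ ξr.blocks,
            Bk ≠ Bk' ∧ (crossEdges G Bk Bk').Nonempty ∧ P = {Bk, Bk'}}, g P :=
  stmt_8_general G r ξr W hWr ρ K φ γ hγ M hM g hg

end Redist
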